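/- A 2n×2n real symmetric matrix σ satisfies the Robertson–Schrödinger uncertainty relation σ + iΩ ≥ 0 (as a complex Hermitian positive semidefinite matrix) if and only if σ is positive definite and σ^{1/2} Ωᵀ σ Ω σ^{1/2} ≥ 𝟙_{2n}. -/

import Mathlib

/-!
Write `s = σ^{1/2}` and `W = s⁻¹ Ω s⁻¹`, a real antisymmetric matrix. Then
`σ + iΩ = s (1 + iW) s`, and since `(1 + iW)ᵀ = 1 - iW`, positivity of `1 + iW` amounts to
`-1 ≤ iW ≤ 1`, i.e. `(iW)² = WᵀW ≤ 1`. As `W (s Ω s) = s⁻¹ Ω² s = -1`, this is the same as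
`(s Ω s)ᵀ (s Ω s) = s Ωᵀ σ Ω s ≥ 1`. Positive definiteness of `σ` is read off real vectors `x`:
there `xᵀ(σ + iΩ)x = xᵀσx`, and a real null vector would lie in the kernel of the invertible `Ω`.
-/

open Matrix
open scoped ComplexOrder

open Classical in
/-- The eigenvalues of a matrix in increasing order (junk value `0` if not Hermitian). -/
noncomputable def eigUp {d : ℕ} (M : Matrix (Fin d) (Fin d) ℝ) : Fin d → ℝ :=
  if h : M.IsHermitian then h.eigenvalues ∘ Tuple.sort h.eigenvalues else 0

/-- The eigenvalues of a matrix in decreasing order. -/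
noncomputable def eigDown {d : ℕ} (M : Matrix (Fin d) (Fin d) ℝ) (j : Fin d) : ℝ :=
  eigUp M j.rev

/-- The standard symplectic form on `2n` canonical variables: block diagonal with
blocks `[[0,1],[-1,0]]`. -/
def Omega (n : ℕ) : Matrix (Fin (2*n)) (Fin (2*n)) ℝ :=
  Matrix.of fun i j =>
    if (i : ℕ) + 1 = (j : ℕ) ∧ (i : ℕ) % 2 = 0 then 1
    else if (j : ℕ) + 1 = (i : ℕ) ∧ (j : ℕ) % 2 = 0 then -1 else 0

/-- Partial transposition matrix `T = 𝟙₂^{⊕ l} ⊕ σz^{⊕ (n-l)}` for the bipartition of the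
first `l` versus the last `n - l` modes. -/
def Tmat (n l : ℕ) : Matrix (Fin (2*n)) (Fin (2*n)) ℝ :=
  Matrix.diagonal fun i => if (i : ℕ) / 2 < l ∨ (i : ℕ) % 2 = 0 then 1 else -1

/-- The partially transposed symplectic form `Ω̃ = T Ω T`. -/
def OmegaPT (n l : ℕ) : Matrix (Fin (2*n)) (Fin (2*n)) ℝ :=
  Tmat n l * Omega n * Tmat n l

open Classical in
/-- The positive square root of a positive semidefinite matrix (junk value `0` otherwise). -/
noncomputable def msqrt {d : ℕ} (M : Matrix (Fin d) (Fin d) ℝ) : Matrix (Fin d) (Fin d) ℝ :=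
  if h : M.PosSemidef then
    (h.1.eigenvectorUnitary : Matrix (Fin d) (Fin d) ℝ) *
      Matrix.diagonal ((↑) ∘ (Real.sqrt ·) ∘ h.1.eigenvalues) *
      (star h.1.eigenvectorUnitary : Matrix (Fin d) (Fin d) ℝ)
  else 0

/-- `σ + iΩ ≥ 0`: the Robertson–Schrödinger condition for a real symmetric matrix `σ`
to be a bona fide covariance matrix. -/
def IsCM (n : ℕ) (σ : Matrix (Fin (2*n)) (Fin (2*n)) ℝ) : Prop :=
  σ.IsSymm ∧
    (σ.map (Complex.ofReal ·) + Complex.I • (Omega n).map (Complex.ofReal ·)).PosSemidef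

/-- `ν̃₋²`, the square of the smallest partially transposed symplectic eigenvalue of `σ`, for
the bipartition of the first `l` versus the remaining modes: the smallest eigenvalue of
`σ^{1/2} Ω̃ᵀ σ Ω̃ σ^{1/2}`. -/
noncomputable def nuSq (n l : ℕ) (σ : Matrix (Fin (2*n)) (Fin (2*n)) ℝ) : ℝ :=
  sInf (spectrum ℝ (msqrt σ * (OmegaPT n l)ᵀ * σ * OmegaPT n l * msqrt σ))

/-- `ν̃₋`, the smallest partially transposed symplectic eigenvalue of `σ`. -/
noncomputable def nuMin (n l : ℕ) (σ : Matrix (Fin (2*n)) (Fin (2*n)) ℝ) : ℝ :=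
  Real.sqrt (nuSq n l σ)

/-- The logarithmic negativity `E_N(σ) = max (0, −log₂ ν̃₋)`. -/
noncomputable def logNeg (n l : ℕ) (σ : Matrix (Fin (2*n)) (Fin (2*n)) ℝ) : ℝ :=
  max 0 (-(Real.logb 2 (nuMin n l σ)))

open scoped MatrixOrder

lemma posSemidef_one_sub_conjTranspose_mul_self_iff {n R : Type*} [Fintype n] [DecidableEq n]
    [CommRing R] [PartialOrder R] [StarRing R] {X Y : Matrix n n R} (hYX : Y * X = 1) :
    (1 - Yᴴ * Y).PosSemidef ↔ (Xᴴ * X - 1).PosSemidef := by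
  have hX : IsUnit X := (isUnit_iff_isUnit_det X).mpr (isUnit_det_of_left_inverse hYX)
  have hXYYX : Xᴴ * (Yᴴ * Y) * X = 1 := by
    calc Xᴴ * (Yᴴ * Y) * X = (Y * X)ᴴ * (Y * X) := by
          simp only [conjTranspose_mul, Matrix.mul_assoc]
      _ = 1 := by rw [hYX, conjTranspose_one, one_mul]
  rw [← hX.posSemidef_star_left_conjugate_iff, star_eq_conjTranspose, mul_sub, sub_mul, mul_one,
    hXYYX]

section
variable {A : Type*} [Ring A] [StarRing A] [PartialOrder A] [StarOrderedRing A] [Algebra ℝ A]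
  [TopologicalSpace A] [ContinuousFunctionalCalculus ℝ A IsSelfAdjoint] [NonnegSpectrumClass ℝ A]

lemma IsSelfAdjoint.neg_one_le_and_le_one_iff {a : A} (ha : IsSelfAdjoint a) :
    -1 ≤ a ∧ a ≤ 1 ↔ a * a ≤ 1 := by
  rw [← sub_nonneg, ← sub_nonneg (b := a), ← sub_nonneg (b := a * a), sub_neg_eq_add]
  rw [← cfc_id' ℝ a, ← cfc_one ℝ a, ← cfc_mul .., ← cfc_add .., ← cfc_sub .., ← cfc_sub ..,
    cfc_nonneg_iff .., cfc_nonneg_iff .., cfc_nonneg_iff .., ← forall₂_and]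
  refine forall₂_congr fun x _ => ?_
  rw [Pi.one_apply]
  constructor
  · rintro ⟨h₁, h₂⟩; nlinarith
  · intro h; constructor <;> nlinarith
end

section Complexification
open Complex (I ofRealHom)
variable {ι : Type*} [Fintype ι] [DecidableEq ι]

lemma conjTranspose_mapMatrix_ofRealHom (R : Matrix ι ι ℝ) :
    (ofRealHom.mapMatrix R)ᴴ = ofRealHom.mapMatrix Rᵀ := by
  ext; simp

lemma mapMatrix_ofRealHom_mulVec (R : Matrix ι ι ℝ) (x : ι → ℝ) :
    ofRealHom.mapMatrix R *ᵥ (ofRealHom ∘ x) = ofRealHom ∘ (R *ᵥ x) :=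
  funext fun i => (RingHom.map_mulVec ofRealHom R x i).symm

lemma dotProduct_mapMatrix_ofRealHom_mulVec (R : Matrix ι ι ℝ) (x : ι → ℝ) :
    star (ofRealHom ∘ x) ⬝ᵥ ofRealHom.mapMatrix R *ᵥ (ofRealHom ∘ x) =
      ↑(x ⬝ᵥ R *ᵥ x) := by
  have hx : star (ofRealHom ∘ x) = ofRealHom ∘ x := by ext; simp
  rw [hx, mapMatrix_ofRealHom_mulVec, ← RingHom.map_dotProduct, Complex.ofRealHom_eq_coe]

lemma posSemidef_mapMatrix_ofRealHom_iff {R : Matrix ι ι ℝ} :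
    (ofRealHom.mapMatrix R).PosSemidef ↔ R.PosSemidef := by
  refine ⟨fun h => .of_dotProduct_mulVec_nonneg ?_ fun x => ?_, fun h => ?_⟩
  · have := h.isHermitian
    rw [IsHermitian, conjTranspose_mapMatrix_ofRealHom] at this
    rw [IsHermitian, conjTranspose_eq_transpose_of_trivial]
    exact map_injective Complex.ofReal_injective this
  · have := h.dotProduct_mulVec_nonneg (ofRealHom ∘ x)
    rwa [dotProduct_mapMatrix_ofRealHom_mulVec, Complex.zero_le_real] at this
  · set s := CFC.sqrt R
    have hsT : sᵀ = s := by
      rw [← conjTranspose_eq_transpose_of_trivial, (CFC.sqrt_nonneg R).posSemidef.isHermitian]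
    have hR : ofRealHom.mapMatrix R = (ofRealHom.mapMatrix s)ᴴ * ofRealHom.mapMatrix s := by
      rw [conjTranspose_mapMatrix_ofRealHom, hsT, ← map_mul, CFC.sqrt_mul_sqrt_self R h.nonneg]
    rw [hR]
    exact posSemidef_conjTranspose_mul_self _

lemma posSemidef_one_add_I_smul_mapMatrix_ofRealHom_iff {W : Matrix ι ι ℝ} (hW : Wᵀ = -W) :
    (1 + I • ofRealHom.mapMatrix W).PosSemidef ↔ (1 - Wᵀ * W).PosSemidef := by
  set B := I • ofRealHom.mapMatrix W
  have hB : B.IsHermitian := by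
    rw [IsHermitian, conjTranspose_smul, conjTranspose_mapMatrix_ofRealHom, hW, map_neg, smul_neg,
      Complex.star_def, Complex.conj_I, neg_smul, neg_neg]
  have hBT : Bᵀ = -B := by
    rw [transpose_smul, show (ofRealHom.mapMatrix W)ᵀ = ofRealHom.mapMatrix Wᵀ from rfl,
      hW, map_neg, smul_neg]
  have hBB : B * B = ofRealHom.mapMatrix (Wᵀ * W) := by
    rw [smul_mul_smul_comm, Complex.I_mul_I, map_mul, hW, map_neg, neg_mul, neg_one_smul]
  have hpm : (1 + B).PosSemidef ↔ (1 + B).PosSemidef ∧ (1 - B).PosSemidef :=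
    ⟨fun h => ⟨h, by simpa [hBT, sub_eq_add_neg] using h.transpose⟩, And.left⟩
  have hB1 := hB.isSelfAdjoint.neg_one_le_and_le_one_iff
  simp only [le_iff, sub_neg_eq_add, add_comm _ (1 : Matrix ι ι ℂ)] at hB1
  rw [hpm, hB1, hBB, ← map_one ofRealHom.mapMatrix, ← map_sub,
    posSemidef_mapMatrix_ofRealHom_iff]

lemma posDef_of_posSemidef_add_I_smul {σ Ω : Matrix ι ι ℝ} (hσ : σ.IsSymm) (hΩT : Ωᵀ = -Ω)
    (hΩ : IsUnit Ω)
    (h : (ofRealHom.mapMatrix σ + I • ofRealHom.mapMatrix Ω).PosSemidef) :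
    σ.PosDef := by
  refine .of_dotProduct_mulVec_pos (by rwa [IsHermitian, conjTranspose_eq_transpose_of_trivial])
    fun x hx => ?_
  have hΩx : x ⬝ᵥ Ω *ᵥ x = 0 := by
    have h := dotProduct_mulVec x Ω x
    rw [← mulVec_transpose, hΩT, neg_mulVec, neg_dotProduct, dotProduct_comm (Ω *ᵥ x)] at h
    linarith
  set z := ofRealHom ∘ x
  have hquad : star z ⬝ᵥ (ofRealHom.mapMatrix σ + I • ofRealHom.mapMatrix Ω) *ᵥ z
      = ↑(x ⬝ᵥ σ *ᵥ x) := by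
    rw [add_mulVec, dotProduct_add, smul_mulVec, dotProduct_smul,
      dotProduct_mapMatrix_ofRealHom_mulVec, dotProduct_mapMatrix_ofRealHom_mulVec, hΩx,
      Complex.ofReal_zero, smul_zero, add_zero]
  have hnonneg : 0 ≤ x ⬝ᵥ σ *ᵥ x :=
    Complex.zero_le_real.mp (hquad ▸ h.dotProduct_mulVec_nonneg z)
  refine hnonneg.lt_of_ne fun hzero => hx ?_
  have hker := (h.dotProduct_mulVec_zero_iff z).mp (by rw [hquad, ← hzero, Complex.ofReal_zero])
  rw [add_mulVec, smul_mulVec, mapMatrix_ofRealHom_mulVec, mapMatrix_ofRealHom_mulVec] at hker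
  have hΩx0 : Ω *ᵥ x = 0 := funext fun i => by
    simpa using congrArg Complex.im (congrFun hker i)
  exact mulVec_injective_iff_isUnit.mpr hΩ (by rw [hΩx0, mulVec_zero])

lemma posSemidef_add_I_smul_iff_of_posDef {σ Ω : Matrix ι ι ℝ} (hσ : σ.PosDef) (hΩT : Ωᵀ = -Ω)
    (hΩΩ : Ω * Ω = -1) :
    (ofRealHom.mapMatrix σ + I • ofRealHom.mapMatrix Ω).PosSemidef ↔
      (CFC.sqrt σ * Ωᵀ * σ * Ω * CFC.sqrt σ - 1).PosSemidef := by
  set s := CFC.sqrt σ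
  have hss : s * s = σ := CFC.sqrt_mul_sqrt_self σ hσ.posSemidef.nonneg
  have hsT : sᵀ = s := by
    rw [← conjTranspose_eq_transpose_of_trivial, (CFC.sqrt_nonneg σ).posSemidef.isHermitian]
  have hs : IsUnit s := (CFC.isUnit_sqrt_iff σ hσ.posSemidef.nonneg).mpr hσ.isUnit
  have hsdet := (isUnit_iff_isUnit_det s).mp hs
  set t := s⁻¹
  have hts : t * s = 1 := nonsing_inv_mul s hsdet
  have hst : s * t = 1 := mul_nonsing_inv s hsdet
  have htT : tᵀ = t := by rw [transpose_nonsing_inv, hsT]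
  set W := t * Ω * t
  have hWT : Wᵀ = -W := by
    simp only [W, transpose_mul, htT, hΩT, neg_mul, mul_neg, Matrix.mul_assoc]
  have hsWs : s * W * s = Ω := by
    simp only [W, ← Matrix.mul_assoc, hst, one_mul]; rw [Matrix.mul_assoc, hts, mul_one]
  have hconj : ofRealHom.mapMatrix σ + I • ofRealHom.mapMatrix Ω =
      star (ofRealHom.mapMatrix s) * (1 + I • ofRealHom.mapMatrix W) *
        ofRealHom.mapMatrix s := by
    rw [star_eq_conjTranspose, conjTranspose_mapMatrix_ofRealHom, hsT, mul_add, add_mul, mul_one,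
      mul_smul_comm, smul_mul_assoc, ← map_mul, ← map_mul, ← map_mul, hss, hsWs]
  have hWX : -W * (s * Ω * s) = 1 := by
    calc -W * (s * Ω * s) = -(t * (Ω * Ω) * s) := by
          simp only [W, neg_mul, Matrix.mul_assoc, neg_inj]
          rw [← Matrix.mul_assoc t s, hts, one_mul]
      _ = 1 := by rw [hΩΩ, mul_neg, neg_mul, neg_neg, mul_one, hts]
  have hXX : (s * Ω * s)ᴴ * (s * Ω * s) = s * Ωᵀ * σ * Ω * s := by
    rw [conjTranspose_eq_transpose_of_trivial, transpose_mul, transpose_mul, hsT, ← hss]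
    simp only [Matrix.mul_assoc]
  rw [hconj, (hs.map ofRealHom.mapMatrix).posSemidef_star_left_conjugate_iff,
    posSemidef_one_add_I_smul_mapMatrix_ofRealHom_iff hWT,
    ← conjTranspose_eq_transpose_of_trivial, ← neg_mul_neg, ← conjTranspose_neg,
    posSemidef_one_sub_conjTranspose_mul_self_iff hWX, hXX]

end Complexification

lemma Omega_transpose (n : ℕ) : (Omega n)ᵀ = -Omega n := by
  ext i j
  simp only [Omega, transpose_apply, of_apply, Matrix.neg_apply]
  split_ifs <;> first | omega | norm_num

lemma Omega_mul_self (n : ℕ) : Omega n * Omega n = -1 := by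
  ext i j
  -- row `i` of `Ω` vanishes outside the column of the other coordinate of the same mode
  have hpartner : (if (i : ℕ) % 2 = 0 then (i : ℕ) + 1 else (i : ℕ) - 1) < 2 * n := by
    split_ifs <;> omega
  rw [mul_apply, Finset.sum_eq_single ⟨_, hpartner⟩ (fun k _ hk => ?_) (by simp)]
  · simp only [Omega, of_apply, Matrix.neg_apply, Matrix.one_apply, Fin.ext_iff]
    split_ifs <;> first | omega | norm_num
  · rw [Ne, Fin.ext_iff] at hk
    simp only [Omega, of_apply] at hk ⊢
    split_ifs at hk ⊢ <;> first | omega | norm_num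

lemma isUnit_Omega (n : ℕ) : IsUnit (Omega n) :=
  (isUnit_iff_isUnit_det _).mpr <|
    isUnit_det_of_left_inverse (B := -Omega n) (by rw [neg_mul, Omega_mul_self, neg_neg])

lemma msqrt_eq_sqrt {d : ℕ} {M : Matrix (Fin d) (Fin d) ℝ} (hM : M.PosSemidef) :
    msqrt M = CFC.sqrt M := by
  rw [CFC.sqrt_eq_real_sqrt M hM.nonneg, cfcₙ_eq_cfc, hM.1.cfc_eq, IsHermitian.cfc,
    Unitary.conjStarAlgAut_apply, msqrt, dif_pos hM]
  rfl

/-- The Robertson–Schrödinger uncertainty relation `σ + iΩ ≥ 0` for a real symmetric `σ`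
holds if and only if `σ` is positive definite and `σ^{1/2} Ωᵀ σ Ω σ^{1/2} ≥ 𝟙`. -/
theorem uncertainty_relation_iff (n : ℕ) (σ : Matrix (Fin (2*n)) (Fin (2*n)) ℝ)
    (hσsym : σ.IsSymm) :
    (σ.map (Complex.ofReal ·) + Complex.I • (Omega n).map (Complex.ofReal ·)).PosSemidef ↔
      σ.PosDef ∧ (msqrt σ * (Omega n)ᵀ * σ * Omega n * msqrt σ - 1).PosSemidef := by
  change (Complex.ofRealHom.mapMatrix σ +
    Complex.I • Complex.ofRealHom.mapMatrix (Omega n)).PosSemidef ↔ _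
  have hequiv := fun hσ : σ.PosDef => msqrt_eq_sqrt hσ.posSemidef ▸
    posSemidef_add_I_smul_iff_of_posDef hσ (Omega_transpose n) (Omega_mul_self n)
  refine ⟨fun h => ?_, fun ⟨hσ, h⟩ => (hequiv hσ).mpr h⟩
  have hσ := posDef_of_posSemidef_add_I_smul hσsym (Omega_transpose n) (isUnit_Omega n) h
  exact ⟨hσ, (hequiv hσ).mp h⟩
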